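/- arXiv:1105.0477 — 7 statements merged into one kernel-verified Lean document; each statement's English description precedes it below -/
import Mathlib

section
/- Let k be a natural number, G a finite simple graph, A, B ⊆ V(G) disjoint sets of vertices, and v_0 a vertex of G such that: (A1) |A| ≥ k and |B| ≥ R_k; (A2) A is a clique in G; (A3) {u, v_0} is an edge for every u ∈ A, and {v, v_0} is not an edge for any v ∈ B; (A4) {u, v} is an edge for every u ∈ A and v ∈ B. Then G contains a k-edge induced subgraph. -/
/-- `G` contains a `k`-edge induced subgraph: there is a nonempty set `S` of vertices
such that the number of edges of `G` with both endpoints in `S` is exactly `k`. -/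
def HasKEdgeInducedSubgraph {V : Type*} (G : SimpleGraph V) (k : ℕ) : Prop :=
  ∃ S : Finset V, S.Nonempty ∧ {e ∈ G.edgeSet | ∀ v ∈ e, v ∈ S}.ncard = k

/-- The Ramsey number `R_k`: the least `N` such that every finite simple graph on at least `N`
vertices contains a clique of size `k` or an independent set of size `k`. -/
noncomputable def ramseyNumber (k : ℕ) : ℕ :=
  sInf {N : ℕ | ∀ (V : Type) (inst : Fintype V) (G : SimpleGraph V),
    N ≤ @Fintype.card V inst →
    (∃ S : Finset V, S.card = k ∧ ∀ u ∈ S, ∀ w ∈ S, u ≠ w → G.Adj u w) ∨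
    (∃ S : Finset V, S.card = k ∧ ∀ u ∈ S, ∀ w ∈ S, u ≠ w → ¬ G.Adj u w)}

/-!
By Ramsey's theorem `B` contains a `k`-clique `C` or an independent `k`-set `I`. In the second
case any `a ∈ A` together with `I` spans exactly `k` edges. In the first case write
`k = C(m, 2) + r` with `1 ≤ r ≤ m ≤ k`. Then `A ∪ (C \ {v0})` is a clique in which `v0` is
adjacent to all of `A` and to none of `C`, so `v0` together with `r` vertices of `A` and
`m - r` vertices of `C \ {v0}` spans `C(m, 2) + r` edges.
-/

open Finset

universe u

lemma Nat.exists_choose_two_add_eq {k : ℕ} (hk : 0 < k) :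
    ∃ m r, 0 < r ∧ r ≤ m ∧ m ≤ k ∧ m.choose 2 + r = k := by
  induction k, hk using Nat.le_induction with
  | base => exact ⟨1, 1, by simp⟩
  | succ k _ ih =>
    obtain ⟨m, r, hr, hrm, hmk, rfl⟩ := ih
    rcases hrm.lt_or_eq with hrm | rfl
    · exact ⟨m, r + 1, by omega, hrm, by omega, by ring⟩
    · refine ⟨r + 1, 1, one_pos, by omega, by omega, ?_⟩
      rw [Nat.choose_succ_succ', Nat.choose_one_right]
      ring

namespace SimpleGraph

variable {V : Type*}

section EdgeCount

variable (G : SimpleGraph V) [DecidableRel G.Adj]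

lemma ncard_edges_subset_eq_card_filter_sym2 (S : Finset V) :
    {e ∈ G.edgeSet | ∀ v ∈ e, v ∈ S}.ncard = #{e ∈ S.sym2 | e ∈ G.edgeSet} := by
  rw [← Set.ncard_coe_finset]
  congr 1
  ext e
  simp only [Set.mem_ofPred_eq, coe_filter, mem_sym2_iff]
  tauto

variable {G} in
lemma IsIndepSet.card_filter_sym2 {T : Finset V} (hT : G.IsIndepSet (T : Set V)) :
    #{e ∈ T.sym2 | e ∈ G.edgeSet} = 0 := by
  rw [card_eq_zero, filter_eq_empty_iff]
  intro e he
  induction e with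
  | _ a b =>
    rw [mk_mem_sym2_iff] at he
    exact fun hab => hT he.1 he.2 (G.ne_of_adj hab) hab

variable [DecidableEq V]

lemma card_filter_sym2_insert {v : V} {T : Finset V} (hv : v ∉ T) :
    #{e ∈ (insert v T).sym2 | e ∈ G.edgeSet} =
      #{e ∈ T.sym2 | e ∈ G.edgeSet} + #{w ∈ T | G.Adj v w} := by
  have hstar : {w ∈ insert v T | s(v, w) ∈ G.edgeSet} = {w ∈ T | G.Adj v w} := by
    simp [filter_insert]
  rw [sym2_insert, filter_union, filter_image, hstar, card_union_of_disjoint,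
    card_image_of_injective _ fun _ _ h => Sym2.congr_right.1 h, add_comm]
  rw [Finset.disjoint_left]
  rintro _ he he'
  obtain ⟨w, -, rfl⟩ := mem_image.1 he
  exact hv (mem_sym2_iff.1 (mem_filter.1 he').1 v (Sym2.mem_mk_left _ _))

variable {G} in
lemma IsClique.card_filter_sym2 {T : Finset V} (hT : G.IsClique (T : Set V)) :
    #{e ∈ T.sym2 | e ∈ G.edgeSet} = (#T).choose 2 := by
  induction T using Finset.induction_on with
  | empty => simp
  | insert v T hv ih =>
    rw [card_filter_sym2_insert G hv, ih (hT.subset (by simp)),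
      filter_true_of_mem fun w hw => hT (by simp) (by simp [hw]) (ne_of_mem_of_not_mem hw hv).symm,
      card_insert_of_notMem hv, Nat.choose_succ_succ', Nat.choose_one_right, add_comm]

lemma hasKEdgeInducedSubgraph_insert {v : V} {T : Finset V} (hv : v ∉ T) :
    HasKEdgeInducedSubgraph G (#{e ∈ T.sym2 | e ∈ G.edgeSet} + #{w ∈ T | G.Adj v w}) :=
  ⟨insert v T, insert_nonempty v T, by
    rw [ncard_edges_subset_eq_card_filter_sym2, card_filter_sym2_insert G hv]⟩

lemma hasKEdgeInducedSubgraph_choose_two_add {v : V} {K : Finset V}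
    (hK : G.IsClique (K : Set V)) (hvK : v ∉ K) {m r : ℕ} (hrm : r ≤ m)
    (hr : r ≤ #{w ∈ K | G.Adj v w}) (hmr : m - r ≤ #{w ∈ K | ¬G.Adj v w}) :
    HasKEdgeInducedSubgraph G (m.choose 2 + r) := by
  obtain ⟨D, hD, hDr⟩ := exists_subset_card_eq hr
  obtain ⟨E, hE, hEm⟩ := exists_subset_card_eq hmr
  have hDE : Disjoint D E := (disjoint_filter_filter_not K K (G.Adj v)).mono hD hE
  have hTK : D ∪ E ⊆ K :=
    union_subset (hD.trans (filter_subset _ _)) (hE.trans (filter_subset _ _))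
  have hnbr : {w ∈ D ∪ E | G.Adj v w} = D := by
    rw [filter_union, filter_true_of_mem fun w hw => (mem_filter.1 (hD hw)).2,
      filter_false_of_mem fun w hw => (mem_filter.1 (hE hw)).2, union_empty]
  have := G.hasKEdgeInducedSubgraph_insert fun h => hvK (hTK h)
  rwa [(hK.subset (coe_subset.2 hTK)).card_filter_sym2, hnbr, card_union_of_disjoint hDE, hDr,
    hEm, Nat.add_sub_cancel' hrm] at this

end EdgeCount

section Ramsey

lemma IsNClique.insert_of_subset_neighbors [DecidableEq V] {G : SimpleGraph V} [DecidableRel G.Adj]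
    {n : ℕ} {v : V} {W S : Finset V} (hv : v ∈ W) (hSW : S ⊆ {w ∈ W.erase v | G.Adj v w})
    (hS : G.IsNClique n S) : insert v S ⊆ W ∧ G.IsNClique (n + 1) (insert v S) :=
  ⟨insert_subset hv (hSW.trans ((filter_subset _ _).trans (erase_subset _ _))),
    hS.insert fun _ hw => (mem_filter.1 (hSW hw)).2⟩

theorem exists_isNClique_or_isNClique_compl (s t : ℕ) :
    ∃ N, ∀ {V : Type u} (G : SimpleGraph V) (W : Finset V), N ≤ #W →
      (∃ S ⊆ W, G.IsNClique s S) ∨ ∃ S ⊆ W, Gᶜ.IsNClique t S := by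
  induction s generalizing t with
  | zero => exact ⟨0, fun _ _ _ => Or.inl ⟨∅, empty_subset _, by simp⟩⟩
  | succ s ihs =>
    induction t with
    | zero => exact ⟨0, fun _ _ _ => Or.inr ⟨∅, empty_subset _, by simp⟩⟩
    | succ t iht =>
      obtain ⟨N₁, h₁⟩ := ihs (t + 1)
      obtain ⟨N₂, h₂⟩ := iht
      refine ⟨N₁ + N₂ + 1, fun G W hW => ?_⟩
      classical
      obtain ⟨v, hv⟩ : W.Nonempty := card_pos.1 (by omega)
      have hsplit :
          #{w ∈ W.erase v | G.Adj v w} + #{w ∈ W.erase v | Gᶜ.Adj v w} = #W - 1 := by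
        have hcompl : {w ∈ W.erase v | Gᶜ.Adj v w} = {w ∈ W.erase v | ¬G.Adj v w} :=
          filter_congr fun w hw => by rw [compl_adj, and_iff_right (ne_of_mem_erase hw).symm]
        rw [hcompl, card_filter_add_card_filter_not, card_erase_of_mem hv]
      rcases (by omega : N₁ ≤ #{w ∈ W.erase v | G.Adj v w} ∨
          N₂ ≤ #{w ∈ W.erase v | Gᶜ.Adj v w}) with h | h
      · rcases h₁ G _ h with ⟨S, hSW, hS⟩ | ⟨S, hSW, hS⟩
        · exact Or.inl ⟨insert v S, hS.insert_of_subset_neighbors hv hSW⟩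
        · exact Or.inr ⟨S, hSW.trans ((filter_subset _ _).trans (erase_subset _ _)), hS⟩
      · rcases h₂ G _ h with ⟨S, hSW, hS⟩ | ⟨S, hSW, hS⟩
        · exact Or.inl ⟨S, hSW.trans ((filter_subset _ _).trans (erase_subset _ _)), hS⟩
        · exact Or.inr ⟨insert v S, hS.insert_of_subset_neighbors hv hSW⟩

lemma ramseyNumber_spec {k : ℕ} {W : Type} [Fintype W] (H : SimpleGraph W)
    (hW : ramseyNumber k ≤ Fintype.card W) :
    (∃ S, H.IsNClique k S) ∨ ∃ S, H.IsNIndepSet k S := by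
  obtain ⟨N, hN⟩ := exists_isNClique_or_isNClique_compl.{0} k k
  have hR : ramseyNumber k ∈ _ := Nat.sInf_mem ⟨N, fun W _ H hW => ?_⟩
  · rcases hR W inferInstance H hW with ⟨S, hSk, hS⟩ | ⟨S, hSk, hS⟩
    exacts [Or.inl ⟨S, hS, hSk⟩, Or.inr ⟨S, hS, hSk⟩]
  · rcases hN H univ hW with ⟨S, -, hS⟩ | ⟨S, -, hS⟩
    · exact Or.inl ⟨S, hS.card_eq, hS.isClique⟩
    · exact Or.inr ⟨S, hS.card_eq, fun u hu w hw huw =>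
        ((compl_adj _ _ _).1 (hS.isClique hu hw huw)).2⟩

lemma exists_isNClique_or_isNIndepSet_of_ramseyNumber_le (G : SimpleGraph V) {k : ℕ}
    {B : Finset V} (hB : ramseyNumber k ≤ #B) :
    (∃ S ⊆ B, G.IsNClique k S) ∨ ∃ S ⊆ B, G.IsNIndepSet k S := by
  -- `ramseyNumber` only speaks about graphs on types in `Type`, hence the detour through `Fin #B`.
  let f : Fin #B ↪ V := B.equivFin.symm.toEmbedding.trans (Function.Embedding.subtype _)
  have hf : ∀ S : Finset (Fin #B), S.map f ⊆ B := fun S x hx => by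
    obtain ⟨i, -, rfl⟩ := mem_map.1 hx
    exact (B.equivFin.symm i).2
  have hpair : ∀ (r : V → V → Prop) (S : Finset (Fin #B)),
      (S : Set (Fin #B)).Pairwise (Function.onFun r f) → (S.map f : Set V).Pairwise r :=
    fun r S hS => by rwa [coe_map, f.injective.injOn.pairwise_image]
  rcases ramseyNumber_spec (G.comap f) (by simpa using hB) with ⟨S, hS⟩ | ⟨S, hS⟩
  · exact Or.inl ⟨S.map f, hf S, hpair _ S hS.isClique, by rw [card_map, hS.card_eq]⟩
  · exact Or.inr ⟨S.map f, hf S, hpair _ S hS.isIndepSet, by rw [card_map, hS.card_eq]⟩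

end Ramsey

end SimpleGraph

theorem apex_structure_general {V : Type*} (G : SimpleGraph V) (k : ℕ)
    (A B : Finset V) (v0 : V)
    (hdisj : Disjoint A B)
    (hAcard : k ≤ A.card) (hBcard : ramseyNumber k ≤ B.card)
    (hAclique : ∀ u ∈ A, ∀ w ∈ A, u ≠ w → G.Adj u w)
    (hA3a : ∀ u ∈ A, G.Adj u v0)
    (hA3b : ∀ w ∈ B, ¬ G.Adj w v0)
    (hA4 : ∀ u ∈ A, ∀ w ∈ B, G.Adj u w) :
    HasKEdgeInducedSubgraph G k := by
  classical
  obtain rfl | hk := k.eq_zero_or_pos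
  · simpa using G.hasKEdgeInducedSubgraph_insert (notMem_empty v0)
  rcases G.exists_isNClique_or_isNIndepSet_of_ramseyNumber_le hBcard with
    ⟨C, hCB, hC⟩ | ⟨I, hIB, hI⟩
  · obtain ⟨m, r, hr, hrm, hmk, hmrk⟩ := Nat.exists_choose_two_add_eq hk
    set K := A ∪ C.erase v0
    have hK : G.IsClique (K : Set V) := by
      rw [SimpleGraph.IsClique, coe_union, Set.pairwise_union]
      refine ⟨hAclique, hC.isClique.subset (by simp), fun a ha b hb _ => ?_⟩
      have := hA4 a ha b (hCB (mem_erase.1 hb).2)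
      exact ⟨this, this.symm⟩
    have hv0K : v0 ∉ K := fun h =>
      (mem_union.1 h).elim (fun h => (hA3a v0 h).ne rfl) fun h => (mem_erase.1 h).1 rfl
    rw [← hmrk]
    refine G.hasKEdgeInducedSubgraph_choose_two_add hK hv0K hrm ?_ ?_
    · refine hAcard.trans' (by omega) |>.trans (card_le_card fun a ha => ?_)
      exact mem_filter.2 ⟨mem_union_left _ ha, (hA3a a ha).symm⟩
    · have hCv0 : #C - 1 ≤ #(C.erase v0) := pred_card_le_card_erase
      rw [hC.card_eq] at hCv0
      refine (by omega : m - r ≤ #(C.erase v0)).trans (card_le_card fun c hc => ?_)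
      exact mem_filter.2 ⟨mem_union_right _ hc, fun h => hA3b c (hCB (mem_erase.1 hc).2) h.symm⟩
  · obtain ⟨a, ha⟩ := card_pos.1 (hk.trans_le hAcard)
    have haI : a ∉ I := fun h => disjoint_left.1 hdisj ha (hIB h)
    simpa [hI.isIndepSet.card_filter_sym2, filter_true_of_mem fun w hw => hA4 a ha w (hIB hw),
      hI.card_eq] using G.hasKEdgeInducedSubgraph_insert haI

theorem apex_structure {V : Type*} [Fintype V] (G : SimpleGraph V) (k : ℕ)
    (A B : Finset V) (v0 : V)
    (hdisj : Disjoint A B)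
    (hAcard : k ≤ A.card) (hBcard : ramseyNumber k ≤ B.card)
    (hAclique : ∀ u ∈ A, ∀ w ∈ A, u ≠ w → G.Adj u w)
    (hA3a : ∀ u ∈ A, G.Adj u v0)
    (hA3b : ∀ w ∈ B, ¬ G.Adj w v0)
    (hA4 : ∀ u ∈ A, ∀ w ∈ B, G.Adj u w) :
    HasKEdgeInducedSubgraph G k :=
  apex_structure_general G k A B v0 hdisj hAcard hBcard hAclique hA3a hA3b hA4
end

section
/- (Gauss's Eureka theorem) For every natural number k there exist natural numbers k_0, k_1, k_2 such that k = k_0(k_0−1)/2 + k_1(k_1−1)/2 + k_2(k_2−1)/2, i.e., every natural number is the sum of three triangular numbers. -/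
/-!
Odd squares are exactly the numbers `8 * C(m, 2) + 1`, while even squares are `0` or `4` modulo `8`;
so it suffices to write `8k + 3` as a sum of three squares, which are then automatically odd.

For `n ≡ 3 (mod 8)`, Dirichlet's theorem gives a prime `q ≡ 1 (mod 4)` with `n m = 2q + 1`, and
quadratic reciprocity for the Jacobi symbol makes `-m` a square modulo `q`, so `u² + m = 2qb` for
some `u`. The integral ternary form `n x² + b y² + 2q z² + 2u yz + 2xy` is then positive definite of
determinant `1` and takes the value `n`. Every value of such a form is a sum of three squares:
permuting the variables and applying shears `x ↦ x ± y` lowers the trace `a + b + c` until the form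
is reduced, and the only reduced positive form of determinant `1` is `x² + y² + z²`.
-/

/-- The integral ternary form with symmetric matrix `!![a, t, s; t, b, r; s, r, c]`. -/
structure TernaryForm where
  (a b c r s t : ℤ)

namespace TernaryForm

variable (Q : TernaryForm)

def eval (x y z : ℤ) : ℤ :=
  Q.a * x ^ 2 + Q.b * y ^ 2 + Q.c * z ^ 2 + 2 * Q.r * y * z + 2 * Q.s * x * z + 2 * Q.t * x * y

def det : ℤ :=
  Q.a * Q.b * Q.c + 2 * Q.r * Q.s * Q.t - Q.a * Q.r ^ 2 - Q.b * Q.s ^ 2 - Q.c * Q.t ^ 2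

def trace : ℤ := Q.a + Q.b + Q.c

def values : Set ℤ := {n | ∃ x y z, Q.eval x y z = n}

def PosDef : Prop := ∀ x y z : ℤ, (x, y, z) ≠ 0 → 0 < Q.eval x y z

def sumSq : TernaryForm := ⟨1, 1, 1, 0, 0, 0⟩

def swap : TernaryForm := ⟨Q.b, Q.a, Q.c, Q.s, Q.r, Q.t⟩

def rotate : TernaryForm := ⟨Q.c, Q.a, Q.b, Q.t, Q.r, Q.s⟩

def shear (k : ℤ) : TernaryForm :=
  ⟨Q.a, Q.b - 2 * Q.t * k + Q.a * k ^ 2, Q.c, Q.r - Q.s * k, Q.s, Q.t - Q.a * k⟩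

theorem eval_swap (x y z : ℤ) : Q.swap.eval x y z = Q.eval y x z := by
  simp only [eval, swap]; ring

theorem eval_rotate (x y z : ℤ) : Q.rotate.eval x y z = Q.eval y z x := by
  simp only [eval, rotate]; ring

theorem eval_shear (k x y z : ℤ) : (Q.shear k).eval x y z = Q.eval (x - k * y) y z := by
  simp only [eval, shear]; ring

theorem det_swap : Q.swap.det = Q.det := by simp only [det, swap]; ring

theorem det_rotate : Q.rotate.det = Q.det := by simp only [det, rotate]; ring

theorem det_shear (k : ℤ) : (Q.shear k).det = Q.det := by simp only [det, shear]; ring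

theorem trace_swap : Q.swap.trace = Q.trace := by simp only [trace, swap]; ring

theorem trace_rotate : Q.rotate.trace = Q.trace := by simp only [trace, rotate]; ring

theorem trace_shear (k : ℤ) : (Q.shear k).trace = Q.trace - 2 * Q.t * k + Q.a * k ^ 2 := by
  simp only [trace, shear]; ring

theorem values_swap : Q.swap.values = Q.values := by
  ext n
  exact ⟨fun ⟨x, y, z, h⟩ => ⟨y, x, z, by rwa [← eval_swap]⟩,
    fun ⟨x, y, z, h⟩ => ⟨y, x, z, by rwa [eval_swap]⟩⟩

theorem values_rotate : Q.rotate.values = Q.values := by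
  ext n
  exact ⟨fun ⟨x, y, z, h⟩ => ⟨y, z, x, by rwa [← eval_rotate]⟩,
    fun ⟨x, y, z, h⟩ => ⟨z, x, y, by rwa [eval_rotate]⟩⟩

theorem values_subset_values_shear (k : ℤ) : Q.values ⊆ (Q.shear k).values := by
  rintro n ⟨x, y, z, rfl⟩
  exact ⟨x + k * y, y, z, by rw [eval_shear, add_sub_cancel_right]⟩

variable {Q}

namespace PosDef

theorem a_pos (hQ : Q.PosDef) : 0 < Q.a := by
  simpa [eval] using hQ 1 0 0 (by simp)

theorem swap (hQ : Q.PosDef) : Q.swap.PosDef := by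
  intro x y z h
  rw [eval_swap]
  exact hQ y x z (by simp only [ne_eq, Prod.mk_eq_zero] at h ⊢; tauto)

theorem rotate (hQ : Q.PosDef) : Q.rotate.PosDef := by
  intro x y z h
  rw [eval_rotate]
  exact hQ y z x (by simp only [ne_eq, Prod.mk_eq_zero] at h ⊢; tauto)

theorem shear (hQ : Q.PosDef) (k : ℤ) : (Q.shear k).PosDef := by
  intro x y z h
  rw [eval_shear]
  refine hQ _ y z fun h0 => h ?_
  simp only [Prod.mk_eq_zero, sub_eq_zero] at h0 ⊢
  obtain ⟨hx, rfl, rfl⟩ := h0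
  simpa using hx

theorem trace_pos (hQ : Q.PosDef) : 0 < Q.trace := by
  have hb := hQ.swap.a_pos
  have hc := hQ.rotate.a_pos
  simp only [TernaryForm.swap, TernaryForm.rotate] at hb hc
  unfold trace
  linarith [hQ.a_pos]

end PosDef

theorem posDef_of_minors_pos (ha : 0 < Q.a) (hD : 0 < Q.a * Q.b - Q.t ^ 2) (hdet : 0 < Q.det) :
    Q.PosDef := by
  set D := Q.a * Q.b - Q.t ^ 2
  set E := Q.a * Q.r - Q.s * Q.t
  intro x y z hxyz
  by_contra! hle
  have key : Q.a * D * Q.eval x y z =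
      D * (Q.a * x + Q.t * y + Q.s * z) ^ 2 + (D * y + E * z) ^ 2 + Q.a * Q.det * z ^ 2 := by
    simp only [D, E, eval, det]; ring
  have hsum : Q.a * D * Q.eval x y z ≤ 0 :=
    mul_nonpos_of_nonneg_of_nonpos (by positivity) hle
  have h1 : 0 ≤ D * (Q.a * x + Q.t * y + Q.s * z) ^ 2 := by positivity
  have h2 : 0 ≤ (D * y + E * z) ^ 2 := by positivity
  have h3 : 0 ≤ Q.a * Q.det * z ^ 2 := by positivity
  have hz : z = 0 := by
    have : Q.a * Q.det * z ^ 2 = 0 := by linarith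
    simpa [ha.ne', hdet.ne'] using this
  subst hz
  have hy : y = 0 := by
    have : (D * y + E * 0) ^ 2 = 0 := by linarith
    simpa [hD.ne'] using this
  subst hy
  have hx : x = 0 := by
    have : D * (Q.a * x + Q.t * 0 + Q.s * 0) ^ 2 = 0 := by linarith
    simpa [hD.ne', ha.ne'] using this
  exact hxyz (by simp [hx])

theorem PosDef.exists_shear_trace_lt (hQ : Q.PosDef) (h : Q.a < |2 * Q.t|) :
    ∃ P : TernaryForm, P.PosDef ∧ P.det = Q.det ∧ P.trace < Q.trace ∧ Q.values ⊆ P.values := by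
  refine ⟨Q.shear Q.t.sign, hQ.shear _, det_shear _ _, ?_, values_subset_values_shear _ _⟩
  have ha := hQ.a_pos
  -- the trace changes by `a - 2|t| < 0`
  rw [trace_shear]
  rcases lt_trichotomy Q.t 0 with ht | ht | ht
  · rw [Int.sign_eq_neg_one_of_neg ht]
    rw [abs_of_neg (by linarith)] at h
    linarith
  · simp only [ht, mul_zero, abs_zero] at h
    linarith
  · rw [Int.sign_eq_one_of_pos ht]
    rw [abs_of_pos (by linarith)] at h
    linarith

theorem PosDef.exists_trace_lt (hQ : Q.PosDef)
    (h : Q.a < |2 * Q.t| ∨ Q.a < |2 * Q.s| ∨ Q.b < |2 * Q.r|) :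
    ∃ P : TernaryForm, P.PosDef ∧ P.det = Q.det ∧ P.trace < Q.trace ∧ Q.values ⊆ P.values := by
  rcases h with h | h | h
  · exact hQ.exists_shear_trace_lt h
  · obtain ⟨P, hP, hdet, htr, hval⟩ := hQ.rotate.swap.exists_shear_trace_lt h
    rw [det_swap, det_rotate] at hdet
    rw [trace_swap, trace_rotate] at htr
    rw [values_swap, values_rotate] at hval
    exact ⟨P, hP, hdet, htr, hval⟩
  · obtain ⟨P, hP, hdet, htr, hval⟩ := hQ.rotate.rotate.exists_shear_trace_lt h
    rw [det_rotate, det_rotate] at hdet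
    rw [trace_rotate, trace_rotate] at htr
    rw [values_rotate, values_rotate] at hval
    exact ⟨P, hP, hdet, htr, hval⟩

theorem forall_of_forall_sorted {p : TernaryForm → Prop} (swap : ∀ Q, p Q.swap → p Q)
    (rotate : ∀ Q, p Q.rotate → p Q) (sorted : ∀ Q : TernaryForm, Q.a ≤ Q.b → Q.b ≤ Q.c → p Q)
    (Q : TernaryForm) : p Q := by
  rcases le_total Q.a Q.b with hab | hba
  · rcases le_total Q.b Q.c with hbc | hcb
    · exact sorted Q hab hbc
    rcases le_total Q.a Q.c with hac | hca
    · exact rotate Q (swap _ (sorted _ hac hcb))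
    · exact rotate Q (sorted _ hca hab)
  · rcases le_total Q.b Q.c with hbc | hcb
    · rcases le_total Q.a Q.c with hac | hca
      · exact swap Q (sorted _ hba hac)
      · exact rotate Q (rotate _ (sorted _ hbc hca))
    · exact rotate Q (rotate _ (swap _ (sorted _ hcb hba)))

variable (Q) in
def Reduced : Prop :=
  Q.a ≤ Q.b ∧ Q.b ≤ Q.c ∧ |2 * Q.t| ≤ Q.a ∧ |2 * Q.s| ≤ Q.a ∧ |2 * Q.r| ≤ Q.b

namespace Reduced

/- With `D = ab - t²`, `F = ac - s²`, `E = ar - st` one has `D F = a det + E²`. Reduction gives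
`4D ≥ 3ab`, `4F ≥ 3ac` and `4|E| ≤ 3ab`, so `9a²bc ≤ 16a + 9a²b²`, which forces `c ≤ b` once
`a ≥ 2`. -/
theorem c_le_b (hQ : Q.Reduced) (ha : 2 ≤ Q.a) (hdet : Q.det = 1) : Q.c ≤ Q.b := by
  obtain ⟨a, b, c, r, s, t⟩ := Q
  obtain ⟨hab, -, ht, hs, hr⟩ := hQ
  obtain ⟨ht₁, ht₂⟩ := abs_le.mp ht
  obtain ⟨hs₁, hs₂⟩ := abs_le.mp hs
  obtain ⟨hr₁, hr₂⟩ := abs_le.mp hr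
  dsimp only [det] at *
  by_contra! hbc
  have hident : (a * b - t ^ 2) * (a * c - s ^ 2) = a + (a * r - s * t) ^ 2 := by
    linear_combination a * hdet
  have hD : 3 * (a * b) ≤ 4 * (a * b - t ^ 2) := by
    nlinarith [mul_le_mul_of_nonneg_left hab (by linarith : (0 : ℤ) ≤ a)]
  have hF : 3 * (a * c) ≤ 4 * (a * c - s ^ 2) := by nlinarith
  have hab₀ : 0 < a * b := by nlinarith
  have hac₀ : 0 < a * c := by nlinarith
  have hDF : 9 * (a ^ 2 * b * c) ≤ 16 * ((a * b - t ^ 2) * (a * c - s ^ 2)) := by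
    nlinarith [mul_le_mul hD hF (by linarith) (by linarith)]
  have hE₁ : 4 * (a * r - s * t) ≤ 3 * (a * b) := by
    nlinarith [mul_nonneg (by linarith : (0 : ℤ) ≤ a) (by linarith : (0 : ℤ) ≤ b - 2 * r),
      sq_nonneg (s + t), sq_nonneg (s - t)]
  have hE₂ : -(3 * (a * b)) ≤ 4 * (a * r - s * t) := by
    nlinarith [mul_nonneg (by linarith : (0 : ℤ) ≤ a) (by linarith : (0 : ℤ) ≤ b + 2 * r),
      sq_nonneg (s + t), sq_nonneg (s - t)]
  have hE : 16 * (a * r - s * t) ^ 2 ≤ 9 * (a ^ 2 * b ^ 2) := by nlinarith [sq_le_sq' hE₂ hE₁]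
  nlinarith

/- The same argument with the roles of `a` and `c = b` exchanged:
`(ab - s²)(b² - r²) = b det + (bt - rs)²`. -/
theorem b_le_a (hQ : Q.Reduced) (ha : 2 ≤ Q.a) (hcb : Q.c = Q.b) (hdet : Q.det = 1) :
    Q.b ≤ Q.a := by
  obtain ⟨a, b, c, r, s, t⟩ := Q
  obtain ⟨-, -, ht, hs, hr⟩ := hQ
  obtain ⟨ht₁, ht₂⟩ := abs_le.mp ht
  obtain ⟨hs₁, hs₂⟩ := abs_le.mp hs
  obtain ⟨hr₁, hr₂⟩ := abs_le.mp hr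
  dsimp only [det] at *
  subst c
  by_contra! hab
  have hident : (a * b - s ^ 2) * (b * b - r ^ 2) = b + (b * t - r * s) ^ 2 := by
    linear_combination b * hdet
  have hD : 3 * (a * b) ≤ 4 * (a * b - s ^ 2) := by
    nlinarith [mul_le_mul_of_nonneg_left hab.le (by linarith : (0 : ℤ) ≤ a)]
  have hF : 3 * (b * b) ≤ 4 * (b * b - r ^ 2) := by nlinarith
  have hab₀ : 0 < a * b := by nlinarith
  have hDF : 9 * (a * b * b * b) ≤ 16 * ((a * b - s ^ 2) * (b * b - r ^ 2)) := by
    nlinarith [mul_le_mul hD hF (by nlinarith) (by linarith)]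
  have hE₁ : 4 * (b * t - r * s) ≤ 3 * (a * b) := by
    nlinarith [mul_nonneg (by linarith : (0 : ℤ) ≤ b) (by linarith : (0 : ℤ) ≤ a - 2 * t),
      mul_nonneg (by linarith : (0 : ℤ) ≤ b - 2 * r) (by linarith : (0 : ℤ) ≤ a - 2 * s),
      mul_nonneg (by linarith : (0 : ℤ) ≤ b + 2 * r) (by linarith : (0 : ℤ) ≤ a + 2 * s)]
  have hE₂ : -(3 * (a * b)) ≤ 4 * (b * t - r * s) := by
    nlinarith [mul_nonneg (by linarith : (0 : ℤ) ≤ b) (by linarith : (0 : ℤ) ≤ a + 2 * t),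
      mul_nonneg (by linarith : (0 : ℤ) ≤ b - 2 * r) (by linarith : (0 : ℤ) ≤ a + 2 * s),
      mul_nonneg (by linarith : (0 : ℤ) ≤ b + 2 * r) (by linarith : (0 : ℤ) ≤ a - 2 * s)]
  have hE : 16 * (b * t - r * s) ^ 2 ≤ 9 * (a ^ 2 * b ^ 2) := by nlinarith [sq_le_sq' hE₂ hE₁]
  nlinarith

/- For odd `a` reduction sharpens to `|2x| ≤ a - 1`, and the identity of `c_le_b` then gives
`(a + 1)²(3a - 1)² ≤ 16a + (a - 1)²(3a - 1)²`. -/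
theorem a_lt_three (hQ : Q.Reduced) (hb : Q.b = Q.a) (hc : Q.c = Q.a) (hodd : Odd Q.a)
    (hdet : Q.det = 1) : Q.a < 3 := by
  obtain ⟨a, b, c, r, s, t⟩ := Q
  obtain ⟨-, -, ht, hs, hr⟩ := hQ
  dsimp only [det] at *
  subst b c
  by_contra! ha3
  obtain ⟨j, hj⟩ := hodd
  obtain ⟨ht₁, ht₂⟩ : 2 * t ≤ a - 1 ∧ -(a - 1) ≤ 2 * t := by rw [abs_le] at ht; omega
  obtain ⟨hs₁, hs₂⟩ : 2 * s ≤ a - 1 ∧ -(a - 1) ≤ 2 * s := by rw [abs_le] at hs; omega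
  obtain ⟨hr₁, hr₂⟩ : 2 * r ≤ a - 1 ∧ -(a - 1) ≤ 2 * r := by rw [abs_le] at hr; omega
  have hident : (a * a - t ^ 2) * (a * a - s ^ 2) = a + (a * r - s * t) ^ 2 := by
    linear_combination a * hdet
  have hD : (a + 1) * (3 * a - 1) ≤ 4 * (a * a - t ^ 2) := by nlinarith
  have hF : (a + 1) * (3 * a - 1) ≤ 4 * (a * a - s ^ 2) := by nlinarith
  have hDF : (a + 1) ^ 2 * (3 * a - 1) ^ 2 ≤ 16 * ((a * a - t ^ 2) * (a * a - s ^ 2)) := by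
    nlinarith [mul_le_mul hD hF (by nlinarith) (by nlinarith)]
  have hE₁ : 4 * (a * r - s * t) ≤ (a - 1) * (3 * a - 1) := by
    nlinarith [mul_nonneg (by linarith : (0 : ℤ) ≤ a) (by linarith : (0 : ℤ) ≤ (a - 1) - 2 * r),
      sq_nonneg (s + t), sq_nonneg (s - t)]
  have hE₂ : -((a - 1) * (3 * a - 1)) ≤ 4 * (a * r - s * t) := by
    nlinarith [mul_nonneg (by linarith : (0 : ℤ) ≤ a) (by linarith : (0 : ℤ) ≤ (a - 1) + 2 * r),
      sq_nonneg (s + t), sq_nonneg (s - t)]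
  have hE : 16 * (a * r - s * t) ^ 2 ≤ (a - 1) ^ 2 * (3 * a - 1) ^ 2 := by
    nlinarith [sq_le_sq' hE₂ hE₁]
  nlinarith

theorem a_eq_one (hQ : Q.Reduced) (ha : 0 < Q.a) (hdet : Q.det = 1) : Q.a = 1 := by
  by_contra! hne
  have ha2 : 2 ≤ Q.a := by omega
  have hc : Q.c = Q.b := le_antisymm (hQ.c_le_b ha2 hdet) hQ.2.1
  have hb : Q.b = Q.a := le_antisymm (hQ.b_le_a ha2 hc hdet) hQ.1
  have hodd : Odd Q.a := by
    rw [← Int.not_even_iff_odd]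
    rintro ⟨j, hj⟩
    have h2 : (2 : ℤ) ∣ Q.det :=
      ⟨4 * j ^ 3 + Q.r * Q.s * Q.t - j * (Q.r ^ 2 + Q.s ^ 2 + Q.t ^ 2), by
        rw [det, hc, hb, hj]; ring⟩
    omega
  have h3 := hQ.a_lt_three hb (hc.trans hb) hodd hdet
  obtain ⟨j, hj⟩ := hodd
  omega

theorem eq_sumSq (hQ : Q.Reduced) (ha : 0 < Q.a) (hdet : Q.det = 1) : Q = sumSq := by
  have ha1 := hQ.a_eq_one ha hdet
  obtain ⟨a, b, c, r, s, t⟩ := Q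
  obtain ⟨hab, hbc, ht, hs, hr⟩ := hQ
  dsimp only at ha1 hab hbc ht hs hr
  subst a
  obtain ⟨rfl, rfl⟩ : t = 0 ∧ s = 0 := by
    rw [abs_le] at ht hs; omega
  obtain ⟨hr₁, hr₂⟩ := abs_le.mp hr
  simp only [det] at hdet
  obtain rfl : b = 1 := by nlinarith
  obtain rfl : r = 0 := by omega
  obtain rfl : c = 1 := by linarith
  rfl

end Reduced

theorem PosDef.values_subset_of_det_eq_one (hQ : Q.PosDef) (hdet : Q.det = 1) :
    Q.values ⊆ sumSq.values := by
  suffices ∀ N : ℕ, ∀ Q : TernaryForm, Q.trace ≤ N → Q.PosDef → Q.det = 1 →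
      Q.values ⊆ sumSq.values from this _ Q (Int.self_le_toNat _) hQ hdet
  intro N
  induction N with
  | zero => exact fun Q hN hQ _ => absurd hN (not_le.2 hQ.trace_pos)
  | succ N ih =>
    refine forall_of_forall_sorted ?_ ?_ ?_
    · intro Q h hN hQ hdet
      rw [← values_swap]
      exact h (by rwa [trace_swap]) hQ.swap (by rwa [det_swap])
    · intro Q h hN hQ hdet
      rw [← values_rotate]
      exact h (by rwa [trace_rotate]) hQ.rotate (by rwa [det_rotate])
    · intro Q hab hbc hN hQ hdet
      by_cases hred : Q.Reduced
      · rw [hred.eq_sumSq hQ.a_pos hdet]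
      · have : Q.a < |2 * Q.t| ∨ Q.a < |2 * Q.s| ∨ Q.b < |2 * Q.r| := by
          simp only [Reduced, not_and_or, not_le] at hred
          omega
        obtain ⟨P, hP, hPdet, hPtr, hPval⟩ := hQ.exists_trace_lt this
        exact hPval.trans (ih P (by push_cast at hN; omega) hP (hPdet.trans hdet))

end TernaryForm

theorem four_dvd_sq_or_eq_eight_mul_choose_two_add_one (a : ℕ) :
    4 ∣ a ^ 2 ∨ ∃ m : ℕ, a ^ 2 = 8 * m.choose 2 + 1 := by
  rcases Nat.even_or_odd' a with ⟨e, rfl | rfl⟩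
  · exact Or.inl ⟨e ^ 2, by ring⟩
  · refine Or.inr ⟨e + 1, ?_⟩
    obtain ⟨T, hT⟩ := Nat.even_mul_succ_self e
    rw [Nat.choose_two_right, Nat.add_sub_cancel, Nat.mul_comm (e + 1), hT,
      show (T + T) / 2 = T by omega]
    nlinarith [hT]

theorem exists_prime_mod_four_eq_one_mul_eq (n : ℕ) (hn : n % 8 = 3) :
    ∃ q m : ℕ, q.Prime ∧ q % 4 = 1 ∧ n * m = 2 * q + 1 := by
  obtain ⟨k, rfl⟩ : ∃ k, n = 8 * k + 3 := ⟨n / 8, by omega⟩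
  have hcop : Nat.Coprime (4 * k + 1) (4 * (8 * k + 3)) := by
    refine Nat.Coprime.mul_right (by simp [Nat.Coprime, Nat.gcd_comm]) ?_
    rw [show 8 * k + 3 = 1 + (4 * k + 1) * 2 by ring]
    simp
  obtain ⟨q, -, hq, hqk⟩ := Nat.forall_exists_prime_gt_and_eq_mod
    ((ZMod.isUnit_iff_coprime _ _).2 hcop) 0
  have hmod : q % (4 * (8 * k + 3)) = 4 * k + 1 := by
    rw [(ZMod.natCast_eq_natCast_iff' _ _ _).1 hqk]
    exact Nat.mod_eq_of_lt (by omega)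
  obtain ⟨j, rfl⟩ : ∃ j, q = 4 * (8 * k + 3) * j + (4 * k + 1) :=
    ⟨_, by rw [← hmod, Nat.div_add_mod]⟩
  refine ⟨_, 8 * j + 1, hq, ?_, by ring⟩
  rw [show 4 * (8 * k + 3) * j + (4 * k + 1) = 4 * ((8 * k + 3) * j + k) + 1 by ring]
  omega

open scoped NumberTheorySymbols in
theorem isSquare_neg_of_mul_eq {q n m : ℕ} [Fact q.Prime] (hq : q % 4 = 1) (hn : n % 8 = 3)
    (h : n * m = 2 * q + 1) : IsSquare (-(m : ZMod q)) := by
  have hodd : Odd n := Nat.odd_iff.2 (by omega)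
  have hJ : J(n | q) = 1 :=
    calc J(n | q) = J(q | n) := (jacobiSym.quadratic_reciprocity_one_mod_four hq hodd).symm
      _ = J(2 ^ 2 * q | n) := by
        rw [jacobiSym.mul_left,
          jacobiSym.sq_one' (by simpa [Int.gcd] using Nat.coprime_two_left.2 hodd), one_mul]
      _ = J(-2 | n) := by
        apply jacobiSym.mod_left'
        have hZ : (n : ℤ) * m = 2 * q + 1 := by exact_mod_cast h
        rw [show (2 ^ 2 * q : ℤ) = -2 + n * (2 * m) by linear_combination (-2) * hZ,
          Int.add_mul_emod_self_left]
      _ = 1 := by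
        rw [jacobiSym.at_neg_two hodd, ZMod.χ₈'_nat_eq_if_mod_eight, if_neg (by omega),
          if_pos (by omega)]
  have hnm : (n : ZMod q) * m = 1 := by
    have := congrArg (Nat.cast : ℕ → ZMod q) h
    push_cast [ZMod.natCast_self] at this
    simpa using this
  obtain ⟨r, hr⟩ := ZMod.isSquare_of_jacobiSym_eq_one hJ
  obtain ⟨i, hi⟩ := ZMod.exists_sq_eq_neg_one_iff.2 (by omega : q % 4 ≠ 3)
  -- `(i r m)² = -n m² = -m`
  refine ⟨i * r * m, ?_⟩
  push_cast at hr
  linear_combination (m : ZMod q) * hnm - (m : ZMod q) ^ 2 * hr + (m : ZMod q) ^ 2 * r ^ 2 * hi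

theorem exists_sq_add_eq_two_mul {q m : ℕ} [Fact q.Prime] (hq : Odd q) (hm : Odd m)
    (h : IsSquare (-(m : ZMod q))) : ∃ u b : ℤ, u ^ 2 + m = 2 * q * b := by
  obtain ⟨w, hw⟩ := h
  set v : ℤ := (w.val : ℤ)
  have hv : (v : ZMod q) = w := by simp [v]
  -- `u ≡ v (mod q)`, and `u` is odd because `q + 1` is even and `q` is odd
  set u := v + q * (v + 1)
  have hq_dvd : (q : ℤ) ∣ u ^ 2 + m := by
    rw [← ZMod.intCast_zmod_eq_zero_iff_dvd]
    push_cast [u, hv, ZMod.natCast_self]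
    linear_combination -hw
  have h2_dvd : (2 : ℤ) ∣ u ^ 2 + m := by
    rw [← even_iff_two_dvd]
    have hq' : ¬Even q := Nat.not_even_iff_odd.2 hq
    have hm' : ¬Even m := Nat.not_even_iff_odd.2 hm
    simp [u, Int.even_add, Int.even_mul, parity_simps, hq', hm', ← Int.not_even_iff_odd]
  have hcop : IsCoprime (2 : ℤ) q := Int.isCoprime_iff_gcd_eq_one.2 (by
    simpa [Int.gcd] using Nat.coprime_two_left.2 hq)
  obtain ⟨b, hb⟩ := hcop.mul_dvd h2_dvd hq_dvd
  exact ⟨u, b, hb⟩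

theorem Nat.sum_three_squares_of_mod_eight_eq_three (n : ℕ) (hn : n % 8 = 3) :
    ∃ a b c : ℕ, a ^ 2 + b ^ 2 + c ^ 2 = n := by
  obtain ⟨q, m, hq, hq4, hnm⟩ := exists_prime_mod_four_eq_one_mul_eq n hn
  have := Fact.mk hq
  have hqodd : Odd q := Nat.odd_iff.2 (by omega)
  have hmodd : Odd m := (Nat.odd_mul.1 (hnm ▸ odd_two_mul_add_one q)).2
  obtain ⟨u, b, hub⟩ :=
    exists_sq_add_eq_two_mul hqodd hmodd (isSquare_neg_of_mul_eq hq4 hn hnm)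
  have hnmZ : (n : ℤ) * m = 2 * q + 1 := by exact_mod_cast hnm
  let Q : TernaryForm := ⟨n, b, 2 * q, u, 0, 1⟩
  have hdet : Q.det = 1 := by
    simp only [Q, TernaryForm.det]
    linear_combination (-(n : ℤ)) * hub + hnmZ
  have hb : 0 < b := by
    have hm := hmodd.pos
    have : (0 : ℤ) < 2 * q * b := by rw [← hub]; positivity
    have : (0 : ℤ) < q := by exact_mod_cast hq.pos
    nlinarith
  have hQ : Q.PosDef := TernaryForm.posDef_of_minors_pos (by simp only [Q]; omega)
    (by simp only [Q]; nlinarith) (by rw [hdet]; exact one_pos)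
  obtain ⟨x, y, z, hxyz⟩ := hQ.values_subset_of_det_eq_one hdet ⟨1, 0, 0, rfl⟩
  refine ⟨x.natAbs, y.natAbs, z.natAbs, ?_⟩
  zify
  simpa [sq_abs, Q, TernaryForm.sumSq, TernaryForm.eval] using hxyz

/-- Gauss' Eureka theorem: every natural number is the sum of three triangular numbers. -/
theorem eureka (k : ℕ) :
    ∃ k₀ k₁ k₂ : ℕ, k = k₀ * (k₀ - 1) / 2 + k₁ * (k₁ - 1) / 2 + k₂ * (k₂ - 1) / 2 := by
  obtain ⟨a, b, c, habc⟩ := Nat.sum_three_squares_of_mod_eight_eq_three (8 * k + 3) (by omega)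
  simp only [← Nat.choose_two_right]
  rcases four_dvd_sq_or_eq_eight_mul_choose_two_add_one a with ha | ⟨k₀, ha⟩ <;>
  rcases four_dvd_sq_or_eq_eight_mul_choose_two_add_one b with hb | ⟨k₁, hb⟩ <;>
  rcases four_dvd_sq_or_eq_eight_mul_choose_two_add_one c with hc | ⟨k₂, hc⟩
  case inr.inr.inr => exact ⟨k₀, k₁, k₂, by omega⟩
  all_goals omega
end

section
/- Let k ≥ 1 be a natural number and let G be a finite simple graph without isolated vertices. If G contains an independent set of size (k−1)² + 1, then G contains a k-edge induced subgraph. -/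
open Finset

/-- Brown's criterion for complete sequences. -/
def BrownCondition : List ℕ → Prop
  | [] => True
  | a :: t => a ≤ t.sum + 1 ∧ BrownCondition t

namespace BrownCondition

theorem of_forall_le_one : ∀ {l : List ℕ}, (∀ x ∈ l, x ≤ 1) → BrownCondition l
  | [], _ => trivial
  | a :: t, h => ⟨by have := h a List.mem_cons_self; omega,
      of_forall_le_one fun x hx => h x (List.mem_cons_of_mem a hx)⟩

theorem exists_sublist_sum_eq : ∀ {l : List ℕ}, BrownCondition l → ∀ {n : ℕ}, n ≤ l.sum →
    ∃ l' : List ℕ, l'.Sublist l ∧ l'.sum = n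
  | [], _, n, hn => ⟨[], List.Sublist.refl _, by simp_all⟩
  | a :: t, ⟨ha, ht⟩, n, hn => by
    rw [List.sum_cons] at hn
    by_cases hna : a ≤ n
    · obtain ⟨l', hl', hsum⟩ := ht.exists_sublist_sum_eq (n := n - a) (by omega)
      exact ⟨a :: l', hl'.cons_cons a, by simp only [List.sum_cons]; omega⟩
    · obtain ⟨l', hl', hsum⟩ := ht.exists_sublist_sum_eq (n := n) (by omega)
      exact ⟨l', hl'.cons a, hsum⟩

theorem map_append {α : Type*} {f g : α → ℕ} {m : List ℕ} (hm : BrownCondition m)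
    (hm_pos : 0 < m.sum) (hfg : ∀ a, f a ≤ g a ∧ g a ≤ f a + 1) :
    ∀ {l : List α}, BrownCondition (l.map f) → BrownCondition (l.map g ++ m)
  | [], _ => hm
  | a :: t, ⟨ha, ht⟩ => by
    show g a ≤ (t.map g ++ m).sum + 1 ∧ _
    refine ⟨?_, map_append hm hm_pos hfg ht⟩
    have htail : (t.map f).sum ≤ (t.map g).sum := List.sum_le_sum fun b _ => (hfg b).1
    simp only [List.sum_append]
    have := (hfg a).2
    omega

end BrownCondition

namespace SimpleGraph

variable {V : Type*} (G : SimpleGraph V)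

theorem finite_setOf_mem_edgeSet_forall_mem (T : Finset V) :
    {e ∈ G.edgeSet | ∀ v ∈ e, v ∈ T}.Finite :=
  T.sym2.finite_toSet.subset fun _ he => mem_sym2_iff.2 he.2

noncomputable def inducedEdgeCount (T : Finset V) : ℕ := {e ∈ G.edgeSet | ∀ v ∈ e, v ∈ T}.ncard

variable {G}

@[simp]
theorem inducedEdgeCount_empty : G.inducedEdgeCount ∅ = 0 := by
  rw [inducedEdgeCount, Set.ncard_eq_zero (G.finite_setOf_mem_edgeSet_forall_mem ∅)]
  ext e
  simp only [Set.mem_ofPred_eq, Finset.notMem_empty, imp_false, Set.mem_empty_iff_false,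
    iff_false, not_and]
  exact fun _ h => h e.out.1 (Sym2.out_fst_mem e)

theorem hasKEdgeInducedSubgraph_of_inducedEdgeCount_eq {T : Finset V} {k : ℕ}
    (h : G.inducedEdgeCount T = k) (hk : 0 < k) : HasKEdgeInducedSubgraph G k := by
  refine ⟨T, nonempty_iff_ne_empty.2 ?_, h⟩
  rintro rfl
  simp [← h] at hk

variable (G) [DecidableRel G.Adj]

def degreeIn (C : Finset V) (a : V) : ℕ := #{c ∈ C | G.Adj a c}

variable {G}

theorem degreeIn_le_card (C : Finset V) (a : V) : G.degreeIn C a ≤ #C :=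
  card_filter_le _ _

theorem degreeIn_pos_iff {C : Finset V} {a : V} : 0 < G.degreeIn C a ↔ ∃ c ∈ C, G.Adj a c := by
  simp [degreeIn, card_pos, filter_nonempty_iff]

theorem degreeIn_eq_zero_iff {C : Finset V} {a : V} :
    G.degreeIn C a = 0 ↔ ∀ c ∈ C, ¬G.Adj a c := by
  simp [degreeIn, filter_eq_empty_iff]

variable [DecidableEq V]

theorem degreeIn_insert {C : Finset V} {v : V} (hv : v ∉ C) (a : V) :
    G.degreeIn (insert v C) a = G.degreeIn C a + if G.Adj a v then 1 else 0 := by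
  unfold degreeIn
  rw [filter_insert]
  split_ifs
  · exact card_insert_of_notMem fun h => hv (mem_of_mem_filter v h)
  · rfl

theorem degreeIn_union {C B : Finset V} (h : Disjoint C B) (a : V) :
    G.degreeIn (C ∪ B) a = G.degreeIn C a + G.degreeIn B a := by
  rw [degreeIn, filter_union, card_union_of_disjoint (disjoint_filter_filter h)]
  rfl

theorem inducedEdgeCount_insert {a : V} {T : Finset V} (ha : a ∉ T) :
    G.inducedEdgeCount (insert a T) = G.inducedEdgeCount T + G.degreeIn T a := by
  have hsplit : {e ∈ G.edgeSet | ∀ v ∈ e, v ∈ insert a T}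
      = {e ∈ G.edgeSet | ∀ v ∈ e, v ∈ T} ∪ (fun b => s(a, b)) '' ↑{b ∈ T | G.Adj a b} := by
    ext ⟨x, y⟩
    simp only [Set.mem_ofPred_eq, Set.mem_union, Set.mem_image, coe_filter, mem_edgeSet,
      Sym2.mem_iff, mem_insert, Sym2.eq_iff, forall_eq_or_imp, forall_eq]
    have := G.ne_of_adj (a := x) (b := y)
    have := G.adj_comm x y
    grind
  have hdisj : Disjoint {e ∈ G.edgeSet | ∀ v ∈ e, v ∈ T}
      ((fun b => s(a, b)) '' ↑{b ∈ T | G.Adj a b}) := by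
    rw [Set.disjoint_left]
    rintro e ⟨_, hT⟩ ⟨b, _, rfl⟩
    exact ha (hT a (Sym2.mem_mk_left a b))
  rw [inducedEdgeCount, hsplit, Set.ncard_union_eq hdisj (G.finite_setOf_mem_edgeSet_forall_mem T)
    (Set.toFinite _), Set.ncard_image_of_injective _ (fun b c h => Sym2.congr_right.1 h),
    Set.ncard_coe_finset]
  rfl

theorem inducedEdgeCount_union_of_isIndepSet {C B : Finset V}
    (hB : G.IsIndepSet B) (hCB : Disjoint C B) :
    G.inducedEdgeCount (C ∪ B) = G.inducedEdgeCount C + ∑ b ∈ B, G.degreeIn C b := by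
  induction B using Finset.induction_on with
  | empty => simp
  | insert b B hb ih =>
    rw [coe_insert] at hB
    rw [disjoint_insert_right] at hCB
    have hbB : G.degreeIn B b = 0 := degreeIn_eq_zero_iff.2 fun c hc hbc =>
      hB (Set.mem_insert b _) (Set.mem_insert_of_mem b hc) (G.ne_of_adj hbc) hbc
    rw [union_insert, inducedEdgeCount_insert (by simp [hb, hCB.1]),
      ih (hB.mono (Set.subset_insert b _)) hCB.2, sum_insert hb, degreeIn_union hCB.2, hbB]
    ring

variable (G) in
/-- `l` lists the vertices of `S` adjacent to the centres `C` in the order in which they were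
attached. -/
structure Attachment (S C : Finset V) (l : List V) : Prop where
  disjoint : Disjoint C S
  nodup : l.Nodup
  toFinset_eq : l.toFinset = {s ∈ S | ∃ c ∈ C, G.Adj s c}
  brownCondition : BrownCondition (l.map (G.degreeIn C))
  card_le_sum : #C ≤ (l.map (G.degreeIn C)).sum

namespace Attachment

variable {S C : Finset V} {l : List V}

theorem empty (S : Finset V) : G.Attachment S ∅ [] where
  disjoint := disjoint_empty_left S
  nodup := List.nodup_nil
  toFinset_eq := by simp
  brownCondition := trivial
  card_le_sum := le_rfl

theorem mem_iff (hA : G.Attachment S C l) {a : V} : a ∈ l ↔ a ∈ S ∧ ∃ c ∈ C, G.Adj a c := by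
  rw [← List.mem_toFinset, hA.toFinset_eq, mem_filter]

theorem length_le_sum (hA : G.Attachment S C l) : l.length ≤ (l.map (G.degreeIn C)).sum := by
  rw [← List.length_map (G.degreeIn C)]
  refine List.length_le_sum_of_one_le _ fun w hw => ?_
  obtain ⟨a, ha, rfl⟩ := List.mem_map.1 hw
  exact degreeIn_pos_iff.2 (hA.mem_iff.1 ha).2

theorem exists_inducedEdgeCount_eq (hA : G.Attachment S C l) (hS : G.IsIndepSet S) {n : ℕ}
    (hn : n ≤ (l.map (G.degreeIn C)).sum) :
    ∃ B ⊆ S, G.inducedEdgeCount (C ∪ B) = G.inducedEdgeCount C + n := by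
  obtain ⟨ws, hws, rfl⟩ := hA.brownCondition.exists_sublist_sum_eq hn
  obtain ⟨l', hl', rfl⟩ := List.sublist_map_iff.1 hws
  have hBS : l'.toFinset ⊆ S := fun b hb =>
    (hA.mem_iff.1 (hl'.subset (List.mem_toFinset.1 hb))).1
  refine ⟨l'.toFinset, hBS, ?_⟩
  rw [inducedEdgeCount_union_of_isIndepSet (hS.mono (by exact_mod_cast hBS))
    (hA.disjoint.mono_right hBS), List.sum_toFinset _ (hA.nodup.sublist hl')]

theorem step (hA : G.Attachment S C l) (hS : G.IsIndepSet S) {s v : V} (hs : s ∈ S)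
    (hsl : s ∉ l) (hsv : G.Adj s v) :
    ∃ C' l', G.Attachment S C' l' ∧
      G.inducedEdgeCount C' ≤ G.inducedEdgeCount C + (l.map (G.degreeIn C)).sum ∧
      G.inducedEdgeCount C + (l.map (G.degreeIn C)).sum <
        G.inducedEdgeCount C' + (l'.map (G.degreeIn C')).sum := by
  set A := {a ∈ S | G.Adj a v} \ l.toFinset
  have hvS : v ∉ S := fun hv => hS hs hv (G.ne_of_adj hsv) hsv
  have hvC : v ∉ C := fun hv => hsl (hA.mem_iff.2 ⟨hs, v, hv, hsv⟩)
  have hcardA : 0 < #A := card_pos.2 ⟨s, by simp [A, hs, hsv, hsl]⟩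
  have hweight : ∀ a, G.degreeIn C a ≤ G.degreeIn (insert v C) a ∧
      G.degreeIn (insert v C) a ≤ G.degreeIn C a + 1 := by
    intro a
    rw [degreeIn_insert hvC]
    split_ifs <;> omega
  have hweightA : ∀ a ∈ A.toList, G.degreeIn (insert v C) a = 1 := by
    intro a ha
    simp only [A, mem_toList, mem_sdiff, mem_filter, List.mem_toFinset, hA.mem_iff] at ha
    have hC : G.degreeIn C a = 0 := degreeIn_eq_zero_iff.2 fun c hc hac => ha.2 ⟨ha.1.1, c, hc, hac⟩
    rw [degreeIn_insert hvC, hC, if_pos ha.1.2]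
  have hsumA : (A.toList.map (G.degreeIn (insert v C))).sum = #A := by
    rw [List.map_congr_left hweightA, List.map_const', List.sum_replicate, length_toList,
      smul_eq_mul, mul_one]
  have hsum : (l.map (G.degreeIn C)).sum ≤ (l.map (G.degreeIn (insert v C))).sum :=
    List.sum_le_sum fun a _ => (hweight a).1
  have hedges := inducedEdgeCount_insert (G := G) hvC
  have hcard := hA.card_le_sum
  have hdegv := degreeIn_le_card (G := G) C v
  refine ⟨insert v C, l ++ A.toList, ⟨?_, ?_, ?_, ?_, ?_⟩, by omega, ?_⟩
  · exact disjoint_insert_left.2 ⟨hvS, hA.disjoint⟩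
  · refine hA.nodup.append A.nodup_toList fun a hal haA => ?_
    simp [A, hal] at haA
  · ext a
    simp only [A, List.toFinset_append, toList_toFinset, hA.toFinset_eq, mem_union, mem_sdiff,
      mem_filter, exists_mem_insert]
    grind
  · rw [List.map_append]
    refine (BrownCondition.of_forall_le_one fun w hw => ?_).map_append (hsumA ▸ hcardA) hweight
      hA.brownCondition
    obtain ⟨a, ha, rfl⟩ := List.mem_map.1 hw
    exact (hweightA a ha).le
  · rw [List.map_append, List.sum_append, hsumA, card_insert_of_notMem hvC]
    omega
  · rw [List.map_append, List.sum_append, hsumA]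
    omega

theorem hasKEdgeInducedSubgraph (hA : G.Attachment S C l) (hS : G.IsIndepSet S)
    (hadj : ∀ s ∈ S, ∃ v, G.Adj s v) {k : ℕ} (hk : 0 < k) (hkS : k ≤ #S)
    (hC : G.inducedEdgeCount C ≤ k) : HasKEdgeInducedSubgraph G k := by
  induction hgap : k - (G.inducedEdgeCount C + (l.map (G.degreeIn C)).sum)
    using Nat.strong_induction_on generalizing C l with | _ gap ih => ?_
  by_cases hreach : k ≤ G.inducedEdgeCount C + (l.map (G.degreeIn C)).sum
  · obtain ⟨B, -, hB⟩ := hA.exists_inducedEdgeCount_eq hS (n := k - G.inducedEdgeCount C)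
      (by omega)
    exact hasKEdgeInducedSubgraph_of_inducedEdgeCount_eq (by rw [hB]; omega) hk
  · obtain ⟨s, hs, hsl⟩ : ∃ s ∈ S, s ∉ l := by
      by_contra! hcover
      have hSl : #S ≤ l.length :=
        (card_le_card fun s hs => List.mem_toFinset.2 (hcover s hs)).trans l.toFinset_card_le
      have := hA.length_le_sum
      omega
    obtain ⟨v, hsv⟩ := hadj s hs
    obtain ⟨C', l', hA', hle, hlt⟩ := hA.step hS hs hsl hsv
    exact ih _ (by omega) hA' (by omega) rfl

end Attachment

end SimpleGraph

theorem large_independent_set {V : Type*} [Fintype V] (G : SimpleGraph V)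
    [DecidableRel G.Adj] (k : ℕ) (hk : 1 ≤ k)
    (hnoiso : ∀ v : V, 0 < G.degree v)
    (S : Finset V) (hScard : S.card = (k - 1) ^ 2 + 1)
    (hSindep : ∀ u ∈ S, ∀ w ∈ S, u ≠ w → ¬ G.Adj u w) :
    HasKEdgeInducedSubgraph G k := by
  classical
  have hkS : k ≤ #S := by
    have := Nat.le_self_pow two_ne_zero (k - 1)
    omega
  exact (SimpleGraph.Attachment.empty S).hasKEdgeInducedSubgraph hSindep
    (fun s _ => (G.degree_pos_iff_exists_adj s).1 (hnoiso s)) hk hkS (by simp)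
end

section
/- Let m, n ≥ 1 be natural numbers and G a finite simple graph. Let A, B ⊆ V(G) be disjoint sets such that every u ∈ A has at least one neighbor in B. If |A| > (m−1)(n−1), then (i) either there exist m pairwise distinct vertices u_1, …, u_m ∈ A and a vertex v ∈ B with {u_i, v} an edge of G for every i ∈ {1,…,m}, (ii) or there exist pairwise distinct vertices u_1, …, u_n ∈ A and pairwise distinct vertices v_1, …, v_n ∈ B such that for all i, j ∈ {1,…,n}, {u_i, v_j} is an edge of G if and only if i = j. -/
/-!
If some `v ∈ B` has at least `m` neighbours in `A`, they give (i). Otherwise every `v ∈ B` has at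
most `m - 1` neighbours in `A`, and an induced matching of size `n` is built greedily: take
`u₀ ∈ A` whose neighbourhood in `B` is as small as possible and a neighbour `v₀ ∈ B` of it, then
recurse on the vertices of `A` not adjacent to `v₀` and those of `B` not adjacent to `u₀`. At most
`m - 1` vertices of `A` are lost, and by minimality of `u₀` every remaining vertex of `A` still has
a neighbour among the remaining vertices of `B`.
-/

open Finset

namespace SimpleGraph

variable {V : Type*} (G : SimpleGraph V)

def HasInducedMatching (A B : Finset V) (n : ℕ) : Prop :=
  ∃ u : Fin n → V, ∃ v : Fin n → V, Function.Injective u ∧ Function.Injective v ∧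
    (∀ i, u i ∈ A) ∧ (∀ i, v i ∈ B) ∧ ∀ i j : Fin n, G.Adj (u i) (v j) ↔ i = j

variable {G} {A B : Finset V}

theorem hasInducedMatching_zero : G.HasInducedMatching A B 0 :=
  ⟨Fin.elim0, Fin.elim0, fun i => i.elim0, fun i => i.elim0, fun i => i.elim0, fun i => i.elim0,
    fun i => i.elim0⟩

variable [DecidableRel G.Adj]

theorem HasInducedMatching.cons {n : ℕ} {u₀ v₀ : V} (hu₀ : u₀ ∈ A) (hv₀ : v₀ ∈ B)
    (hadj : G.Adj u₀ v₀)
    (h : G.HasInducedMatching {u ∈ A | ¬G.Adj u v₀} {w ∈ B | ¬G.Adj u₀ w} n) :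
    G.HasInducedMatching A B (n + 1) := by
  obtain ⟨u, v, hu, hv, huA, hvB, hiff⟩ := h
  simp only [mem_filter] at huA hvB
  refine ⟨Fin.cons u₀ u, Fin.cons v₀ v, ?_, ?_, ?_, ?_, ?_⟩
  · refine Fin.cons_injective_iff.2 ⟨?_, hu⟩
    rintro ⟨i, rfl⟩
    exact (huA i).2 hadj
  · refine Fin.cons_injective_iff.2 ⟨?_, hv⟩
    rintro ⟨i, rfl⟩
    exact (hvB i).2 hadj
  · exact Fin.cases hu₀ fun i => (huA i).1
  · exact Fin.cases hv₀ fun i => (hvB i).1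
  · refine Fin.cases (Fin.cases ?_ fun j => ?_) fun i => Fin.cases ?_ fun j => ?_
    · exact iff_of_true hadj rfl
    · exact iff_of_false (hvB j).2 (Fin.succ_ne_zero j).symm
    · exact iff_of_false (huA i).2 (Fin.succ_ne_zero i)
    · exact (hiff i j).trans Fin.succ_inj.symm

theorem exists_adj_forall_exists_adj_of_not_adj (hA : A.Nonempty)
    (hnb : ∀ u ∈ A, ∃ w ∈ B, G.Adj u w) :
    ∃ u₀ ∈ A, ∃ v₀ ∈ B, G.Adj u₀ v₀ ∧
      ∀ u ∈ {u ∈ A | ¬G.Adj u v₀}, ∃ w ∈ {w ∈ B | ¬G.Adj u₀ w}, G.Adj u w := by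
  obtain ⟨u₀, hu₀, hmin⟩ := A.exists_min_image (fun u => #{w ∈ B | G.Adj u w}) hA
  obtain ⟨v₀, hv₀, hadj⟩ := hnb u₀ hu₀
  refine ⟨u₀, hu₀, v₀, hv₀, hadj, fun u hu => ?_⟩
  rw [mem_filter] at hu
  by_contra! hcon
  have hsub : {w ∈ B | G.Adj u w} ⊆ {w ∈ B | G.Adj u₀ w} := fun w hw => by
    rw [mem_filter] at hw ⊢
    exact ⟨hw.1, not_not.1 fun h => hcon w (mem_filter.2 ⟨hw.1, h⟩) hw.2⟩
  have hv₀u : v₀ ∈ {w ∈ B | G.Adj u w} := by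
    rw [eq_of_subset_of_card_le hsub (hmin u hu.1)]
    exact mem_filter.2 ⟨hv₀, hadj⟩
  exact hu.2 (mem_filter.1 hv₀u).2

theorem hasInducedMatching_of_card_filter_adj_le {k n : ℕ}
    (hdeg : ∀ v ∈ B, #{u ∈ A | G.Adj u v} ≤ k) (hnb : ∀ u ∈ A, ∃ w ∈ B, G.Adj u w)
    (hcard : k * (n - 1) < #A) : G.HasInducedMatching A B n := by
  induction n generalizing A B with
  | zero => exact hasInducedMatching_zero
  | succ n ih =>
    obtain ⟨u₀, hu₀, v₀, hv₀, hadj, hnb'⟩ :=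
      exists_adj_forall_exists_adj_of_not_adj (card_pos.1 (by omega)) hnb
    refine .cons hu₀ hv₀ hadj ?_
    rcases Nat.eq_zero_or_pos n with rfl | hn
    · exact hasInducedMatching_zero
    refine ih (fun v hv => ?_) hnb' ?_
    · exact (card_le_card (filter_subset_filter _ (filter_subset _ _))).trans
        (hdeg v (mem_filter.1 hv).1)
    · have hsplit := card_filter_add_card_filter_not (s := A) (fun u => G.Adj u v₀)
      have hv₀deg := hdeg v₀ hv₀
      have hk : k * (n - 1) + k = k * n := by
        rw [← Nat.mul_succ, Nat.succ_eq_add_one, Nat.sub_add_cancel hn]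
      simp only [Nat.add_sub_cancel] at hcard
      omega

end SimpleGraph

theorem Finset.exists_injective_fin_of_le_card {α : Type*} {s : Finset α} {m : ℕ}
    (h : m ≤ #s) : ∃ u : Fin m → α, Function.Injective u ∧ ∀ i, u i ∈ s :=
  ⟨fun i => s.equivFin.symm (Fin.castLE h i),
    Subtype.val_injective.comp (s.equivFin.symm.injective.comp (Fin.castLE_injective h)),
    fun i => (s.equivFin.symm (Fin.castLE h i)).2⟩

theorem bipartite_matching_lemma_general {V : Type*} (G : SimpleGraph V)
    (m n : ℕ)
    (A B : Finset V)
    (hnb : ∀ u ∈ A, ∃ w ∈ B, G.Adj u w)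
    (hcard : (m - 1) * (n - 1) < A.card) :
    (∃ u : Fin m → V, Function.Injective u ∧ (∀ i, u i ∈ A) ∧
      ∃ v ∈ B, ∀ i, G.Adj (u i) v) ∨
    (∃ u : Fin n → V, ∃ v : Fin n → V, Function.Injective u ∧ Function.Injective v ∧
      (∀ i, u i ∈ A) ∧ (∀ i, v i ∈ B) ∧
      ∀ i j : Fin n, G.Adj (u i) (v j) ↔ i = j) := by
  classical
  by_cases hstar : ∃ v ∈ B, m ≤ #{u ∈ A | G.Adj u v}
  · obtain ⟨v, hv, hm⟩ := hstar
    obtain ⟨u, hu, huN⟩ := exists_injective_fin_of_le_card hm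
    simp only [mem_filter] at huN
    exact .inl ⟨u, hu, fun i => (huN i).1, v, hv, fun i => (huN i).2⟩
  · push Not at hstar
    exact .inr (G.hasInducedMatching_of_card_filter_adj_le
      (fun v hv => Nat.le_sub_one_of_lt (hstar v hv)) hnb hcard)

theorem bipartite_matching_lemma {V : Type*} [Fintype V] (G : SimpleGraph V)
    (m n : ℕ) (hm : 1 ≤ m) (hn : 1 ≤ n)
    (A B : Finset V) (hdisj : Disjoint A B)
    (hnb : ∀ u ∈ A, ∃ w ∈ B, G.Adj u w)
    (hcard : (m - 1) * (n - 1) < A.card) :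
    (∃ u : Fin m → V, Function.Injective u ∧ (∀ i, u i ∈ A) ∧
      ∃ v ∈ B, ∀ i, G.Adj (u i) v) ∨
    (∃ u : Fin n → V, ∃ v : Fin n → V, Function.Injective u ∧ Function.Injective v ∧
      (∀ i, u i ∈ A) ∧ (∀ i, v i ∈ B) ∧
      ∀ i j : Fin n, G.Adj (u i) (v j) ↔ i = j) :=
  bipartite_matching_lemma_general G m n A B hnb hcard
end

section
/- Let G be a finite connected simple graph and let S ⊆ V(G) be a dominating set of G. Then for all vertices u, v of G, the distance d(u, v) in G is at most 3·|S| − 1; that is, the diameter of G is bounded by 3·|S| − 1. -/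
/-!
Walk from `u` along a shortest `u`–`v` path and mark the vertices at distance `0, 3, 6, …`
from `u`. Two marked vertices are at distance at least `3` from each other, so they cannot
share a dominator (that would put them within distance `2`). Hence a dominating set has more
than `d(u, v) / 3` elements.
-/

namespace SimpleGraph

variable {V : Type*} {G : SimpleGraph V}

def IsDominating (G : SimpleGraph V) (S : Set V) : Prop :=
  ∀ v, v ∈ S ∨ ∃ u ∈ S, G.Adj u v

lemma IsDominating.exists_dist_le_one {S : Set V} (hS : G.IsDominating S) (v : V) :
    ∃ s ∈ S, G.dist v s ≤ 1 := by
  rcases hS v with hv | ⟨s, hs, hadj⟩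
  · exact ⟨v, hv, by simp⟩
  · exact ⟨s, hs, dist_le hadj.symm.toWalk⟩

lemma Reachable.exists_dist_eq {u v : V} (h : G.Reachable u v) {t : ℕ} (ht : t ≤ G.dist u v) :
    ∃ w, G.dist u w = t := by
  obtain ⟨p, hp⟩ := h.exists_walk_length_eq_dist
  refine ⟨p.getVert t, ?_⟩
  rw [← length_eq_dist_of_subwalk hp (p.isSubwalk_take t), Walk.take_length]
  omega

theorem IsDominating.dist_div_three_lt_card (hconn : G.Connected) {S : Finset V}
    (hS : G.IsDominating S) (u v : V) : G.dist u v / 3 < S.card := by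
  set k := G.dist u v / 3
  have hlayer : ∀ m ∈ Finset.range (k + 1), ∃ w, G.dist u w = 3 * m := fun m hm =>
    (hconn u v).exists_dist_eq (by rw [Finset.mem_range] at hm; omega)
  have : Nonempty V := ⟨u⟩
  choose! w hw using hlayer
  choose! s hsS hs using hS.exists_dist_le_one
  have hclose : ∀ a ∈ Finset.range (k + 1), ∀ b ∈ Finset.range (k + 1),
      s (w a) = s (w b) → 3 * b ≤ 3 * a + 2 := by
    intro a ha b hb hab
    calc 3 * b = G.dist u (w b) := (hw b hb).symm
      _ ≤ G.dist u (w a) + (G.dist (w a) (s (w a)) + G.dist (s (w b)) (w b)) := by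
        rw [hab]
        exact hconn.dist_triangle.trans (add_le_add_right hconn.dist_triangle _)
      _ ≤ 3 * a + (1 + 1) := by
        rw [hw a ha, dist_comm (u := s (w b))]
        gcongr <;> apply hs
  have hinj : Set.InjOn (s ∘ w) (Finset.range (k + 1)) := fun a ha b hb hab => by
    have := hclose a ha b hb hab
    have := hclose b hb a ha hab.symm
    omega
  simpa using Finset.card_le_card_of_injOn _ (fun m _ => Finset.mem_coe.mp (hsS _)) hinj

end SimpleGraph

theorem dominating_set_diameter_general {V : Type*} (G : SimpleGraph V)
    (hconn : G.Connected) (S : Finset V)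
    (hdom : ∀ v : V, v ∈ S ∨ ∃ u ∈ S, G.Adj u v) :
    ∀ u v : V, G.dist u v ≤ 3 * S.card - 1 := by
  intro u v
  have := SimpleGraph.IsDominating.dist_div_three_lt_card hconn (S := S) hdom u v
  omega

theorem dominating_set_diameter {V : Type*} [Fintype V] (G : SimpleGraph V)
    (hconn : G.Connected) (S : Finset V)
    (hdom : ∀ v : V, v ∈ S ∨ ∃ u ∈ S, G.Adj u v) :
    ∀ u v : V, G.dist u v ≤ 3 * S.card - 1 :=
  dominating_set_diameter_general G hconn S hdom
end

section
/- Let d ∈ ℕ, k ≥ 1 and let G be a d-degree-extreme finite simple graph (every vertex v satisfies deg(v) ≤ d or deg(v) ≥ |V(G)| − 1 − d). Define a new simple graph G' on the vertex set V(G) by declaring distinct vertices u, v adjacent in G' if and only if either ({u,v} is an edge of G and at least one of u, v has G-degree ≤ d), or ({u,v} is not an edge of G and both u and v have G-degree > d). If the number of vertices v of G with 1 ≤ deg(v) ≤ d is at most (d+1)·(k−1)², then every vertex of G' has degree at most d + (d+1)·(k−1)² in G'. -/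
/-!
Call a vertex low if its `G`-degree is at most `d` and high otherwise; `G'` keeps the edges of `G`
at low vertices and complements `G` on the high vertices. A low vertex therefore has no more
`G'`-neighbours than `G`-neighbours, at most `d`. A `G'`-neighbour of a high vertex `v` is either a
`G`-neighbour that is low (hence a non-isolated low vertex) or a high `G`-non-neighbour; by
degree-extremality `v` has at most `d` non-neighbours in `G`.
-/

namespace SimpleGraph

variable {V : Type*} (G : SimpleGraph V) [Fintype V] [DecidableRel G.Adj] (d : ℕ)

def complementHighDegree : SimpleGraph V where
  Adj u v := u ≠ v ∧ ((G.Adj u v ∧ (G.degree u ≤ d ∨ G.degree v ≤ d)) ∨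
    (¬ G.Adj u v ∧ d < G.degree u ∧ d < G.degree v))
  symm := ⟨by
    rintro u v ⟨hne, ⟨huv, hlow⟩ | ⟨huv, hu, hv⟩⟩
    · exact ⟨hne.symm, .inl ⟨huv.symm, hlow.symm⟩⟩
    · exact ⟨hne.symm, .inr ⟨fun h ↦ huv h.symm, hv, hu⟩⟩⟩
  loopless := ⟨fun _ h ↦ h.1 rfl⟩

def lowDegreeNonisolated : Finset V :=
  Finset.univ.filter fun v : V => 1 ≤ G.degree v ∧ G.degree v ≤ d

variable {G d}

theorem adj_of_complementHighDegree_adj_of_degree_le {v : V} (hv : G.degree v ≤ d) {u : V}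
    (h : (G.complementHighDegree d).Adj v u) : G.Adj v u := by
  rcases h with ⟨-, ⟨hvu, -⟩ | ⟨-, hv', -⟩⟩
  · exact hvu
  · omega

theorem degree_complementHighDegree_le_of_degree_le
    [DecidableRel (G.complementHighDegree d).Adj] {v : V} (hv : G.degree v ≤ d) :
    (G.complementHighDegree d).degree v ≤ G.degree v :=
  Finset.card_le_card fun u hu ↦ by
    simpa using adj_of_complementHighDegree_adj_of_degree_le hv ((mem_neighborFinset _ _ _).1 hu)

theorem neighborFinset_complementHighDegree_subset [DecidableEq V]
    [DecidableRel (G.complementHighDegree d).Adj] {v : V} (hv : d < G.degree v) :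
    (G.complementHighDegree d).neighborFinset v ⊆
      G.lowDegreeNonisolated d ∪ Gᶜ.neighborFinset v := by
  intro u hu
  rcases (mem_neighborFinset _ _ _).1 hu with ⟨hne, ⟨hvu, hlow⟩ | ⟨hvu, -, -⟩⟩
  · have hu_pos : 0 < G.degree u := (G.degree_pos_iff_exists_adj u).2 ⟨v, hvu.symm⟩
    have hu_low : G.degree u ≤ d := hlow.resolve_left (by omega)
    exact Finset.mem_union_left _ (by simpa [lowDegreeNonisolated] using ⟨hu_pos, hu_low⟩)
  · exact Finset.mem_union_right _ (by simpa [compl_adj] using ⟨hne, hvu⟩)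

theorem degree_complementHighDegree_le_of_lt_degree
    [DecidableRel (G.complementHighDegree d).Adj] {v : V} (hv : d < G.degree v) :
    (G.complementHighDegree d).degree v ≤
      (G.lowDegreeNonisolated d).card + (Fintype.card V - 1 - G.degree v) := by
  classical
  calc (G.complementHighDegree d).degree v
      ≤ (G.lowDegreeNonisolated d ∪ Gᶜ.neighborFinset v).card :=
        Finset.card_le_card (neighborFinset_complementHighDegree_subset hv)
    _ ≤ (G.lowDegreeNonisolated d).card + Gᶜ.degree v := Finset.card_union_le _ _
    _ = (G.lowDegreeNonisolated d).card + (Fintype.card V - 1 - G.degree v) := by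
        rw [degree_compl]

end SimpleGraph

open SimpleGraph in
theorem degree_extreme_structure_bounded_degree_general {V : Type*} [Fintype V]
    (G : SimpleGraph V) [DecidableRel G.Adj] (d k : ℕ)
    (hextreme : ∀ v : V, G.degree v ≤ d ∨ Fintype.card V - 1 - d ≤ G.degree v)
    (G' : SimpleGraph V) [DecidableRel G'.Adj]
    (hG' : ∀ u v : V, G'.Adj u v ↔ (u ≠ v ∧
      ((G.Adj u v ∧ (G.degree u ≤ d ∨ G.degree v ≤ d)) ∨
       (¬ G.Adj u v ∧ d < G.degree u ∧ d < G.degree v))))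
    (hfew : (Finset.univ.filter fun v : V => 1 ≤ G.degree v ∧ G.degree v ≤ d).card
      ≤ (d + 1) * (k - 1) ^ 2) :
    ∀ v : V, G'.degree v ≤ d + (d + 1) * (k - 1) ^ 2 := by
  obtain rfl : G' = G.complementHighDegree d := by ext u v; exact hG' u v
  intro v
  by_cases hv : G.degree v ≤ d
  · have hlow := degree_complementHighDegree_le_of_degree_le (d := d) hv
    omega
  · have hhigh := degree_complementHighDegree_le_of_lt_degree (not_le.1 hv)
    have hlt := G.degree_lt_card_verts v
    have hfew' : (G.lowDegreeNonisolated d).card ≤ (d + 1) * (k - 1) ^ 2 := hfew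
    have hext := (hextreme v).resolve_left hv
    omega

theorem degree_extreme_structure_bounded_degree {V : Type*} [Fintype V]
    (G : SimpleGraph V) [DecidableRel G.Adj] (d k : ℕ) (hk : 1 ≤ k)
    (hextreme : ∀ v : V, G.degree v ≤ d ∨ Fintype.card V - 1 - d ≤ G.degree v)
    (G' : SimpleGraph V) [DecidableRel G'.Adj]
    (hG' : ∀ u v : V, G'.Adj u v ↔ (u ≠ v ∧
      ((G.Adj u v ∧ (G.degree u ≤ d ∨ G.degree v ≤ d)) ∨
       (¬ G.Adj u v ∧ d < G.degree u ∧ d < G.degree v))))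
    (hfew : (Finset.univ.filter fun v : V => 1 ≤ G.degree v ∧ G.degree v ≤ d).card
      ≤ (d + 1) * (k - 1) ^ 2) :
    ∀ v : V, G'.degree v ≤ d + (d + 1) * (k - 1) ^ 2 :=
  degree_extreme_structure_bounded_degree_general G d k hextreme G' hG' hfew
end

section
/- Let k ≥ 1 and let G be a finite simple graph. Define the simple graph H as follows: V(H) consists of the pairs (v, i) for v ∈ V(G) and i ∈ {1, …, k}, together with k−1 additional fresh vertices e_1, …, e_{k−1}; two vertices (u, i) and (v, i) with u ≠ v are adjacent in H; for i < j, (u, i) and (v, j) are adjacent in H if and only if u = v or {u, v} is an edge of G; and e_i is adjacent in H exactly to all vertices (v, j) with j = i or j = i+1. Define the blocks V_{2i−1} = { (v, i) : v ∈ V(G) } for i ∈ {1,…,k} and V_{2i} = {e_i} for i ∈ {1,…,k−1}. If H' is an induced subgraph of H without isolated vertices having exactly 2k−2 edges such that V(H') ∩ V_i ≠ ∅ for every i ∈ {1, …, 2k−1}, then the set { v ∈ V(G) : (v, i) ∈ V(H') for some i } is an independent set of size k in G. -/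
/-!
Each fresh vertex `e_i` lies in `H'` together with a vertex of layer `i` and one of layer `i + 1`,
so, the `e_i` being pairwise non-adjacent, they alone account for `2k - 2` distinct edges of `H'`.
Hence every edge of `H'` meets some `e_i`: the vertices `(v, i)` of `H'` are pairwise non-adjacent
in `H`, which leaves exactly one of them per layer, with distinct and pairwise non-adjacent
`G`-vertices.
-/

open Finset

namespace SimpleGraph

variable {α : Type*} [DecidableEq α] {H : SimpleGraph α}

theorem exists_mem_of_card_le_sum_card_incident {E : Finset (Sym2 α)}
    (hE : ∀ e ∈ E, e ∈ H.edgeSet) {T : Finset α} (hT : ∀ t ∈ T, ∀ t' ∈ T, ¬ H.Adj t t')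
    (hcard : #E ≤ ∑ t ∈ T, #(E.filter (t ∈ ·))) : ∀ e ∈ E, ∃ t ∈ T, t ∈ e := by
  have hdisj : (T : Set α).PairwiseDisjoint (fun t => E.filter (t ∈ ·)) := by
    intro t ht t' ht' hne
    refine Finset.disjoint_left.mpr fun e he he' => ?_
    rw [mem_filter] at he he'
    have hedge : e = s(t, t') := (Sym2.mem_and_mem_iff hne).mp ⟨he.2, he'.2⟩
    exact hT t ht t' ht' (by simpa [hedge] using hE e he.1)
  have hunion : T.biUnion (fun t => E.filter (t ∈ ·)) = E :=
    eq_of_subset_of_card_le (biUnion_subset.mpr fun _ _ => filter_subset _ _)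
      (by rwa [card_biUnion hdisj])
  intro e he
  rw [← hunion, mem_biUnion] at he
  obtain ⟨t, ht, hte⟩ := he
  exact ⟨t, ht, (mem_filter.mp hte).2⟩

theorem two_le_card_filter_mem {E : Finset (Sym2 α)} {a b c : α} (hb : s(a, b) ∈ E)
    (hc : s(a, c) ∈ E) (hbc : b ≠ c) : 2 ≤ #(E.filter (a ∈ ·)) := by
  have hpair : s(a, b) ≠ s(a, c) := fun h => hbc (Sym2.congr_right.mp h)
  calc 2 = #{s(a, b), s(a, c)} := (card_pair hpair).symm
    _ ≤ #(E.filter (a ∈ ·)) := card_le_card <| insert_subset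
          (mem_filter.mpr ⟨hb, Sym2.mem_mk_left _ _⟩)
          (singleton_subset_iff.mpr (mem_filter.mpr ⟨hc, Sym2.mem_mk_left _ _⟩))

end SimpleGraph

theorem card_filter_exists_eq_and_pairwise_not_adj {V ι : Type*} [Fintype V] [DecidableEq V]
    [Fintype ι] (G : SimpleGraph V) (P : V → ι → Prop) [DecidablePred fun v => ∃ i, P v i]
    (hex : ∀ i, ∃ v, P v i)
    (hindep : ∀ v w i j, P v i → P w j →
      ¬ ((i = j ∧ v ≠ w) ∨ (i ≠ j ∧ (v = w ∨ G.Adj v w)))) :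
    #(univ.filter fun v => ∃ i, P v i) = Fintype.card ι ∧
    ∀ u ∈ univ.filter (fun v => ∃ i, P v i), ∀ w ∈ univ.filter (fun v => ∃ i, P v i),
      u ≠ w → ¬ G.Adj u w := by
  have hlayer : ∀ v w i j, P v i → P w j → (v = w ↔ i = j) := by
    intro v w i j hv hw
    have := hindep v w i j hv hw
    tauto
  choose f hf using hex
  have himage : univ.filter (fun v => ∃ i, P v i) = univ.image f := by
    ext v
    simp only [mem_filter, mem_univ, true_and, mem_image]
    exact ⟨fun ⟨i, hi⟩ => ⟨i, (hlayer _ _ _ _ (hf i) hi).mpr rfl⟩, fun ⟨i, hi⟩ => ⟨i, hi ▸ hf i⟩⟩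
  refine ⟨?_, ?_⟩
  · rw [himage, card_image_of_injective _ fun i j hij => (hlayer _ _ _ _ (hf i) (hf j)).mp hij,
      card_univ]
  · intro u hu w hw huw hadj
    obtain ⟨i, hi⟩ := (mem_filter.mp hu).2
    obtain ⟨j, hj⟩ := (mem_filter.mp hw).2
    have hij : i ≠ j := fun hij => huw ((hlayer _ _ _ _ hi hj).mpr hij)
    exact hindep u w i j hi hj (Or.inr ⟨hij, Or.inr hadj⟩)

theorem reduction_claim_general {V : Type*} [Fintype V] [DecidableEq V] (G : SimpleGraph V)
    (k : ℕ)
    (H : SimpleGraph ((V × Fin k) ⊕ Fin (k - 1)))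
    (hH1 : ∀ (u v : V) (i j : Fin k),
      H.Adj (Sum.inl (u, i)) (Sum.inl (v, j)) ↔
        ((i = j ∧ u ≠ v) ∨ (i ≠ j ∧ (u = v ∨ G.Adj u v))))
    (hH2 : ∀ (v : V) (j : Fin k) (e : Fin (k - 1)),
      H.Adj (Sum.inl (v, j)) (Sum.inr e) ↔ ((j : ℕ) = (e : ℕ) ∨ (j : ℕ) = (e : ℕ) + 1))
    (hH3 : ∀ e e' : Fin (k - 1), ¬ H.Adj (Sum.inr e) (Sum.inr e'))
    (SH : Finset ((V × Fin k) ⊕ Fin (k - 1)))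
    (hedges : {e ∈ H.edgeSet | ∀ x ∈ e, x ∈ SH}.ncard = 2 * k - 2)
    (hblocksOdd : ∀ i : Fin k, ∃ v : V, Sum.inl (v, i) ∈ SH)
    (hblocksEven : ∀ i : Fin (k - 1), Sum.inr i ∈ SH) :
    (Finset.univ.filter fun v : V => ∃ i : Fin k, Sum.inl (v, i) ∈ SH).card = k ∧
    ∀ u ∈ (Finset.univ.filter fun v : V => ∃ i : Fin k, Sum.inl (v, i) ∈ SH),
      ∀ w ∈ (Finset.univ.filter fun v : V => ∃ i : Fin k, Sum.inl (v, i) ∈ SH),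
        u ≠ w → ¬ G.Adj u w := by
  classical
  set E := SH.sym2.filter (· ∈ H.edgeSet)
  have hmemE : ∀ x y, x ∈ SH → y ∈ SH → H.Adj x y → s(x, y) ∈ E := fun x y hx hy hxy =>
    mem_filter.mpr ⟨mk_mem_sym2_iff.mpr ⟨hx, hy⟩, hxy⟩
  have hcardE : #E = 2 * k - 2 := by
    rw [← hedges, ← Set.ncard_coe_finset]
    congr 1
    ext e
    simp [E, mem_sym2_iff, and_comm]
  have hhub : ∀ i : Fin (k - 1), 2 ≤ #(E.filter (Sum.inr i ∈ ·)) := by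
    intro i
    obtain ⟨v, hv⟩ := hblocksOdd ⟨i, by omega⟩
    obtain ⟨w, hw⟩ := hblocksOdd ⟨i + 1, by omega⟩
    refine SimpleGraph.two_le_card_filter_mem (hmemE _ _ (hblocksEven i) hv ?_)
      (hmemE _ _ (hblocksEven i) hw ?_) (by simp)
    · exact ((hH2 v _ i).mpr (Or.inl rfl)).symm
    · exact ((hH2 w _ i).mpr (Or.inr rfl)).symm
  have hcover := SimpleGraph.exists_mem_of_card_le_sum_card_incident
    (T := univ.map .inr) (fun e he => (mem_filter.mp he).2) (by simpa using hH3) (by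
      rw [sum_map]
      calc #E = ∑ _i : Fin (k - 1), 2 := by simp [hcardE]; omega
        _ ≤ _ := sum_le_sum fun i _ => hhub i)
  obtain ⟨hcard, hindep⟩ := card_filter_exists_eq_and_pairwise_not_adj G
    (fun v i => Sum.inl (v, i) ∈ SH) hblocksOdd fun v w i j hv hw hadj => by
      obtain ⟨t, ht, hte⟩ := hcover _ (hmemE _ _ hv hw ((hH1 v w i j).mpr hadj))
      obtain ⟨a, -, rfl⟩ := mem_map.mp ht
      simp at hte
  exact ⟨hcard.trans (Fintype.card_fin k), hindep⟩

theorem reduction_claim {V : Type*} [Fintype V] [DecidableEq V] (G : SimpleGraph V)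
    (k : ℕ) (hk : 1 ≤ k)
    (H : SimpleGraph ((V × Fin k) ⊕ Fin (k - 1)))
    (hH1 : ∀ (u v : V) (i j : Fin k),
      H.Adj (Sum.inl (u, i)) (Sum.inl (v, j)) ↔
        ((i = j ∧ u ≠ v) ∨ (i ≠ j ∧ (u = v ∨ G.Adj u v))))
    (hH2 : ∀ (v : V) (j : Fin k) (e : Fin (k - 1)),
      H.Adj (Sum.inl (v, j)) (Sum.inr e) ↔ ((j : ℕ) = (e : ℕ) ∨ (j : ℕ) = (e : ℕ) + 1))
    (hH3 : ∀ e e' : Fin (k - 1), ¬ H.Adj (Sum.inr e) (Sum.inr e'))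
    (SH : Finset ((V × Fin k) ⊕ Fin (k - 1)))
    (hne : SH.Nonempty)
    (hnoiso : ∀ x ∈ SH, ∃ y ∈ SH, H.Adj x y)
    (hedges : {e ∈ H.edgeSet | ∀ x ∈ e, x ∈ SH}.ncard = 2 * k - 2)
    (hblocksOdd : ∀ i : Fin k, ∃ v : V, Sum.inl (v, i) ∈ SH)
    (hblocksEven : ∀ i : Fin (k - 1), Sum.inr i ∈ SH) :
    (Finset.univ.filter fun v : V => ∃ i : Fin k, Sum.inl (v, i) ∈ SH).card = k ∧
    ∀ u ∈ (Finset.univ.filter fun v : V => ∃ i : Fin k, Sum.inl (v, i) ∈ SH),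
      ∀ w ∈ (Finset.univ.filter fun v : V => ∃ i : Fin k, Sum.inl (v, i) ∈ SH),
        u ≠ w → ¬ G.Adj u w :=
  reduction_claim_general G k H hH1 hH2 hH3 SH hedges hblocksOdd hblocksEven
end
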